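/- Fix n, J, N, K ∈ ℕ with n ≥ 1, J ≥ 1, 1 ≤ K ≤ N, K·J even and K·J ≥ 2, and fix ε > 0 and σ > 0. Let F be the set of vectors β : Fin J × Fin N → ℝ such that there exist L ⊆ Fin N with |L| = K and disjoint sets A, B partitioning S = (Fin J) × L with |A| = |B| = KJ/2, β_{ij} = −ε for (i,j) ∈ A, β_{ij} = √(2/(KJ)) + ε for (i,j) ∈ B, and β_{ij} = 0 for (i,j) ∉ S. Assume 2n·log 2 + log 2 ≤ (1/2)·log(C(N,K) · C(KJ, KJ/2)). Then for every measurable estimator β̂ : ℝ^{n×(JN)} × ℝ^n → ℝ^{JN} (vectors indexed by Fin J × Fin N), under the joint law in which β* is uniform on F, X has i.i.d. entries gaussianReal 0 (1/n), e ∈ ℝ^n has i.i.d. entries gaussianReal 0 σ², and β*, X, e are mutually independent, the probability that β̂(X, sign(X·β* + e)) ≠ β* is at least 1/2. -/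

import Mathlib

open MeasureTheory ProbabilityTheory Real
open scoped ENNReal NNReal

noncomputable def signFun (x : ℝ) : ℝ := if 0 ≤ x then 1 else -1

noncomputable def F3block (J N K : ℕ) (ε : ℝ) : Set (Fin J × Fin N → ℝ) :=
  {β | ∃ L : Finset (Fin N), L.card = K ∧
    ∃ A B : Finset (Fin J × Fin N), Disjoint A B ∧
      A ∪ B = Finset.univ ×ˢ L ∧
      A.card = K * J / 2 ∧ B.card = K * J / 2 ∧
      (∀ p ∈ A, β p = -ε) ∧ (∀ p ∈ B, β p = Real.sqrt (2 / (K * J : ℝ)) + ε) ∧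
      ∀ p ∉ A ∪ B, β p = 0}

/-!
The observation `sign(Xβ* + e)` takes at most `2ⁿ` values, so for every fixed `(X, e)` an estimator
can return at most `2ⁿ` distinct signals, and only those can be recovered. Under the uniform prior
on the ensemble, of size `C(N,K) · C(KJ, KJ/2) ≥ 2ⁿ⁺¹` by the logarithmic hypothesis, the
conditional probability of exact recovery is therefore at most `1/2`, whatever `(X, e)` is.
-/

open Finset

section Counting

variable {α Ω Y : Type*} [MeasurableSpace α] [MeasurableSingletonClass α]

lemma uniformOn_le_card_div_card {s T : Finset α} {t : Set α} (ht : t ⊆ T) :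
    uniformOn (s : Set α) t ≤ #T / #s := by
  classical
  calc uniformOn (s : Set α) t ≤ uniformOn (s : Set α) T := measure_mono ht
    _ = #(s ∩ T) / #s := uniformOn_apply_finset
    _ ≤ #T / #s := by gcongr; exact inter_subset_right

lemma uniformOn_decode_eq_le (s : Finset α) (T : Finset Y) (obs : α → Y)
    (hobs : ∀ β, obs β ∈ T) (dec : Y → α) :
    uniformOn (s : Set α) {β | dec (obs β) = β} ≤ #T / #s := by
  classical
  calc uniformOn (s : Set α) {β | dec (obs β) = β} ≤ #(T.image dec) / #s :=
        uniformOn_le_card_div_card fun β hβ => mem_image.2 ⟨obs β, hobs β, hβ⟩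
    _ ≤ #T / #s := by gcongr; exact card_image_le

theorem one_sub_card_div_card_le_uniformOn_prod_decode_ne [MeasurableSpace Ω]
    {s : Finset α} (hs : s.Nonempty) (ν : Measure Ω) [IsProbabilityMeasure ν]
    (T : Finset Y) (obs : α → Ω → Y) (hobs : ∀ β ω, obs β ω ∈ T) (dec : Ω → Y → α)
    (hmeas : MeasurableSet {p : α × Ω | dec p.2 (obs p.1 p.2) = p.1}) :
    1 - #T / #s ≤ (uniformOn (s : Set α)).prod ν {p | dec p.2 (obs p.1 p.2) ≠ p.1} := by
  have := isProbabilityMeasure_uniformOn s.finite_toSet hs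
  have hcorrect :
      (uniformOn (s : Set α)).prod ν {p | dec p.2 (obs p.1 p.2) = p.1} ≤ #T / #s := by
    rw [Measure.prod_apply_symm hmeas]
    calc ∫⁻ ω, uniformOn (s : Set α) {β | dec ω (obs β ω) = β} ∂ν
        ≤ ∫⁻ _, (#T / #s : ℝ≥0∞) ∂ν :=
          lintegral_mono fun ω => uniformOn_decode_eq_le s T (obs · ω) (hobs · ω) (dec ω)
      _ = #T / #s := by simp
  rw [← Set.compl_ofPred, prob_compl_eq_one_sub hmeas]
  exact tsub_le_tsub_left hcorrect 1

lemma half_le_one_sub_div_of_two_mul_le {a b : ℕ} (h : 2 * a ≤ b) :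
    (1 / 2 : ℝ≥0∞) ≤ 1 - a / b := by
  have hab : (a / b : ℝ≥0∞) ≤ 1 / 2 := by
    refine ENNReal.div_le_of_le_mul ?_
    rw [one_div, ← ENNReal.div_eq_inv_mul, ENNReal.le_div_iff_mul_le (by simp) (by simp)]
    exact_mod_cast (mul_comm a 2).trans_le h
  calc (1 / 2 : ℝ≥0∞) = 1 - 1 / 2 := (ENNReal.sub_half ENNReal.one_ne_top).symm
    _ ≤ 1 - a / b := tsub_le_tsub_left hab 1

end Counting

section BlockEnsemble

variable {J N K : ℕ} {ε : ℝ}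

/-- A member `⟨L, A⟩` of the ensemble in `F3block` is determined by its columns `L` and its
`-ε` entries `A`; then `B = (univ ×ˢ L) \ A`. -/
def blockIndex (J N K : ℕ) : Finset (Σ _ : Finset (Fin N), Finset (Fin J × Fin N)) :=
  (univ.powersetCard K).sigma fun L => (univ ×ˢ L).powersetCard (K * J / 2)

lemma mem_blockIndex {L : Finset (Fin N)} {A : Finset (Fin J × Fin N)} :
    ⟨L, A⟩ ∈ blockIndex J N K ↔ #L = K ∧ A ⊆ univ ×ˢ L ∧ #A = K * J / 2 := by
  simp [blockIndex]

lemma card_blockIndex : #(blockIndex J N K) = N.choose K * (K * J).choose (K * J / 2) := by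
  rw [blockIndex, card_sigma, sum_congr rfl fun L hL => ?_, sum_const, card_powersetCard,
    card_univ, Fintype.card_fin, smul_eq_mul]
  rw [card_powersetCard, card_product, card_univ, Fintype.card_fin, (mem_powersetCard.1 hL).2,
    mul_comm]

noncomputable def blockVec (K : ℕ) (ε : ℝ) (LA : Σ _ : Finset (Fin N), Finset (Fin J × Fin N)) :
    Fin J × Fin N → ℝ :=
  fun p => if p ∈ LA.2 then -ε else if p.2 ∈ LA.1 then Real.sqrt (2 / (K * J : ℝ)) + ε else 0

lemma blockVec_neg_iff (hε : 0 < ε) (L : Finset (Fin N)) (A : Finset (Fin J × Fin N))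
    (p : Fin J × Fin N) : blockVec K ε ⟨L, A⟩ p < 0 ↔ p ∈ A := by
  have := Real.sqrt_nonneg (2 / (K * J : ℝ))
  unfold blockVec
  split_ifs <;> simp_all; linarith

lemma blockVec_eq_zero_iff (hε : 0 < ε) {L : Finset (Fin N)} {A : Finset (Fin J × Fin N)}
    (hA : A ⊆ univ ×ˢ L) (p : Fin J × Fin N) : blockVec K ε ⟨L, A⟩ p = 0 ↔ p.2 ∉ L := by
  have := Real.sqrt_nonneg (2 / (K * J : ℝ))
  have hp : p ∈ A → p.2 ∈ L := fun h => (mem_product.1 (hA h)).2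
  unfold blockVec
  split_ifs <;> simp_all <;> linarith

lemma blockVec_injOn (hJ : 0 < J) (hε : 0 < ε) :
    Set.InjOn (blockVec K ε)
      (blockIndex J N K : Set (Σ _ : Finset (Fin N), Finset (Fin J × Fin N))) := by
  rintro ⟨L, A⟩ hLA ⟨L', A'⟩ hLA' h
  obtain ⟨-, hA, -⟩ := mem_blockIndex.1 hLA
  obtain ⟨-, hA', -⟩ := mem_blockIndex.1 hLA'
  have hL : L = L' := by
    ext j
    let p : Fin J × Fin N := (⟨0, hJ⟩, j)
    rw [← not_iff_not]
    calc j ∉ L ↔ blockVec K ε ⟨L, A⟩ p = 0 := (blockVec_eq_zero_iff hε hA p).symm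
      _ ↔ blockVec K ε ⟨L', A'⟩ p = 0 := by rw [h]
      _ ↔ j ∉ L' := blockVec_eq_zero_iff hε hA' p
  have hA : A = A' := by
    ext p
    calc p ∈ A ↔ blockVec K ε ⟨L, A⟩ p < 0 := (blockVec_neg_iff hε L A p).symm
      _ ↔ blockVec K ε ⟨L', A'⟩ p < 0 := by rw [h]
      _ ↔ p ∈ A' := blockVec_neg_iff hε L' A' p
  subst hL hA
  rfl

lemma F3block_eq_image (heven : Even (K * J)) :
    F3block J N K ε = (blockIndex J N K).image (blockVec K ε) := by
  classical
  ext β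
  simp only [F3block, coe_image, Set.mem_image, mem_coe, Set.mem_ofPred_eq]
  constructor
  · rintro ⟨L, hL, A, B, -, hAB, hA, -, hβA, hβB, hβ0⟩
    refine ⟨⟨L, A⟩, mem_blockIndex.2 ⟨hL, hAB ▸ subset_union_left, hA⟩, funext fun p => ?_⟩
    by_cases hpA : p ∈ A
    · simp [blockVec, hpA, hβA p hpA]
    by_cases hpL : p.2 ∈ L
    · have hpB : p ∈ B := by
        have : p ∈ A ∪ B := hAB ▸ mem_product.2 ⟨mem_univ _, hpL⟩
        exact (mem_union.1 this).resolve_left hpA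
      simp [blockVec, hpA, hpL, hβB p hpB]
    · have : p ∉ A ∪ B := hAB ▸ fun h => hpL (mem_product.1 h).2
      simp [blockVec, hpA, hpL, hβ0 p this]
  · rintro ⟨⟨L, A⟩, hLA, rfl⟩
    obtain ⟨hL, hAL, hA⟩ := mem_blockIndex.1 hLA
    refine ⟨L, hL, A, univ ×ˢ L \ A, disjoint_sdiff, union_sdiff_of_subset hAL, hA, ?_, ?_, ?_, ?_⟩
    · rw [card_sdiff_of_subset hAL, card_product, card_univ, Fintype.card_fin, hL, hA,
        mul_comm J K]
      obtain ⟨r, hr⟩ := heven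
      omega
    · intro p hp
      simp [blockVec, hp]
    · intro p hp
      obtain ⟨hpS, hpA⟩ := mem_sdiff.1 hp
      simp [blockVec, hpA, (mem_product.1 hpS).2]
    · intro p hp
      rw [union_sdiff_of_subset hAL, mem_product] at hp
      have hpL : p.2 ∉ L := fun h => hp ⟨mem_univ _, h⟩
      have hpA : p ∉ A := fun h => hpL (mem_product.1 (hAL h)).2
      simp [blockVec, hpA, hpL]

end BlockEnsemble

lemma two_pow_succ_le_of_log_le {n c : ℕ}
    (h : 2 * (n : ℝ) * log 2 + log 2 ≤ 1 / 2 * log c) : 2 ^ (n + 1) ≤ c := by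
  have hlog2 := Real.log_pos one_lt_two
  have hc : 0 < (c : ℝ) := by
    rcases Nat.eq_zero_or_pos c with rfl | hc
    · simp only [Nat.cast_zero, Real.log_zero, mul_zero] at h
      nlinarith
    · exact_mod_cast hc
  have : log ((2 : ℝ) ^ (n + 1)) ≤ log c := by
    rw [Real.log_pow]; push_cast; nlinarith
  exact_mod_cast (Real.log_le_log_iff (by positivity) hc).1 this

@[fun_prop]
lemma measurable_signFun : Measurable signFun :=
  Measurable.ite (measurableSet_le measurable_const measurable_id) measurable_const measurable_const

lemma signFun_mem (x : ℝ) : signFun x ∈ ({1, -1} : Finset ℝ) := by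
  unfold signFun; split_ifs <;> simp

theorem onebit_cs_block_sparsity_lower_bound_general
    (n J N K : ℕ) (hJ : 1 ≤ J)
    (heven : Even (K * J))
    (ε σ : ℝ) (hε : 0 < ε)
    (hbound : 2 * (n : ℝ) * Real.log 2 + Real.log 2 ≤
      (1 / 2) * Real.log ((N.choose K : ℝ) * ((K * J).choose (K * J / 2) : ℝ)))
    (est : (Fin n → Fin J × Fin N → ℝ) × (Fin n → ℝ) → (Fin J × Fin N → ℝ))
    (hest : Measurable est) :
    (1 / 2 : ℝ≥0∞) ≤
      ((uniformOn (F3block J N K ε)).prod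
          ((Measure.pi fun _ : Fin n => Measure.pi fun _ : Fin J × Fin N =>
              gaussianReal 0 (1 / (n : ℝ≥0))).prod
            (Measure.pi fun _ : Fin n => gaussianReal 0 ⟨σ ^ 2, sq_nonneg σ⟩)))
        {ω : (Fin J × Fin N → ℝ) × ((Fin n → Fin J × Fin N → ℝ) × (Fin n → ℝ)) |
          est (ω.2.1, fun i => signFun ((∑ p, ω.2.1 i p * ω.1 p) + ω.2.2 i)) ≠ ω.1} := by
  set F := (blockIndex J N K).image (blockVec K ε)
  have hcard : #F = N.choose K * (K * J).choose (K * J / 2) := by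
    rw [card_image_of_injOn (blockVec_injOn hJ hε), card_blockIndex]
  have hF : 2 ^ (n + 1) ≤ #F := hcard ▸ two_pow_succ_le_of_log_le (by exact_mod_cast hbound)
  have hobs : Measurable fun ω : (Fin J × Fin N → ℝ) ×
      ((Fin n → Fin J × Fin N → ℝ) × (Fin n → ℝ)) =>
      (ω.2.1, fun i => signFun ((∑ p, ω.2.1 i p * ω.1 p) + ω.2.2 i)) := by
    fun_prop
  -- instance search does not find this for the variance written as an anonymous constructor
  have : IsProbabilityMeasure (gaussianReal 0 ⟨σ ^ 2, sq_nonneg σ⟩) :=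
    instIsProbabilityMeasureGaussianReal 0 _
  rw [F3block_eq_image heven]
  refine le_trans ?_ (one_sub_card_div_card_le_uniformOn_prod_decode_ne
    (card_pos.1 (lt_of_lt_of_le (by positivity) hF)) _
    (Fintype.piFinset fun _ : Fin n => ({1, -1} : Finset ℝ))
    (fun β (ω : (Fin n → Fin J × Fin N → ℝ) × (Fin n → ℝ)) i =>
      signFun ((∑ p, ω.1 i p * β p) + ω.2 i))
    (fun β ω => Fintype.mem_piFinset.2 fun i => signFun_mem _) (fun ω y => est (ω.1, y))
    (measurableSet_eq_fun (hest.comp hobs) measurable_fst))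
  rw [Fintype.card_piFinset_const, card_pair (by norm_num)]
  exact half_le_one_sub_div_of_two_mul_le (by simpa [pow_succ, mul_comm] using hF)

theorem onebit_cs_block_sparsity_lower_bound
    (n J N K : ℕ) (hn : 1 ≤ n) (hJ : 1 ≤ J) (hK1 : 1 ≤ K) (hKN : K ≤ N)
    (heven : Even (K * J)) (hKJ2 : 2 ≤ K * J)
    (ε σ : ℝ) (hε : 0 < ε) (hσ : 0 < σ)
    (hbound : 2 * (n : ℝ) * Real.log 2 + Real.log 2 ≤
      (1 / 2) * Real.log ((N.choose K : ℝ) * ((K * J).choose (K * J / 2) : ℝ)))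
    (est : (Fin n → Fin J × Fin N → ℝ) × (Fin n → ℝ) → (Fin J × Fin N → ℝ))
    (hest : Measurable est) :
    (1 / 2 : ℝ≥0∞) ≤
      ((uniformOn (F3block J N K ε)).prod
          ((Measure.pi fun _ : Fin n => Measure.pi fun _ : Fin J × Fin N =>
              gaussianReal 0 (1 / (n : ℝ≥0))).prod
            (Measure.pi fun _ : Fin n => gaussianReal 0 ⟨σ ^ 2, sq_nonneg σ⟩)))
        {ω : (Fin J × Fin N → ℝ) × ((Fin n → Fin J × Fin N → ℝ) × (Fin n → ℝ)) |
          est (ω.2.1, fun i => signFun ((∑ p, ω.2.1 i p * ω.1 p) + ω.2.2 i)) ≠ ω.1} :=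
  onebit_cs_block_sparsity_lower_bound_general n J N K hJ heven ε σ hε hbound est hest
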